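/- arXiv:2303.02853 — 2 statements merged into one kernel-verified Lean document; each statement's English description precedes it below -/
import Mathlib

section
/- (Fourth Rule of Triangles) Let n ≥ 3 and let A and B be the z-matrix and w-matrix of a singular sequence and C = A + B. Then for all 1 ≤ i < j < k ≤ n, the quantity c_{ij} c_{jk} c_{ik} · max{ a_{ij} + a_{jk} + a_{ik}, b_{ij} + b_{jk} + b_{ik} } belongs to the set {0, 3, 24}. -/
open Filter Finset

/-- `Zq δ z k l` is the quantity `Z_{lk} = δ_{kl}^3 · (z_k − z_l)`
(and, applied to `w`, the quantity `W_{lk}`). -/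
noncomputable def Zq {n : ℕ} (δ : Fin n → Fin n → ℂ) (z : Fin n → ℂ) (k l : Fin n) : ℂ :=
  δ k l ^ 3 * (z k - z l)

/-- A singular sequence of normalized central configurations for the masses `m`:
sequences `z^{(N)}, w^{(N)} ∈ ℂ^n`, symmetric `δ^{(N)}`, and positive reals `ε_N → 0`
such that every term satisfies the central configuration equations
`z_k = ∑_{l≠k} m_l Z_{lk}`, `w_k = ∑_{l≠k} m_l W_{lk}`, the normalization
`δ_{kl}^2 z_{kl} w_{kl} = 1` (`k ≠ l`), the maximum of the `|z_k|, |Z_{kl}|`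
(resp. `|w_k|, |W_{kl}|`) equals `ε_N^{-2}`, and all the sequences
`ε_N^2 z_k, ε_N^2 w_k, ε_N^2 Z_{kl}, ε_N^2 W_{kl}` converge. -/
structure SingularSeq (n : ℕ) (m : Fin n → ℂ) : Type where
  z : ℕ → Fin n → ℂ
  w : ℕ → Fin n → ℂ
  delta : ℕ → Fin n → Fin n → ℂ
  eps : ℕ → ℝ
  eps_pos : ∀ N, 0 < eps N
  eps_lim : Tendsto eps atTop (nhds 0)
  delta_symm : ∀ N, ∀ k l : Fin n, delta N k l = delta N l k
  eq_z : ∀ N, ∀ k : Fin n, z N k = ∑ l ∈ univ.erase k, m l * Zq (delta N) (z N) k l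
  eq_w : ∀ N, ∀ k : Fin n, w N k = ∑ l ∈ univ.erase k, m l * Zq (delta N) (w N) k l
  normalize : ∀ N, ∀ k l : Fin n, k ≠ l →
    delta N k l ^ 2 * (z N l - z N k) * (w N l - w N k) = 1
  maxZ : ∀ N, IsGreatest
      ({x : ℝ | ∃ k, x = ‖z N k‖} ∪
        {x : ℝ | ∃ k l, k ≠ l ∧ x = ‖Zq (delta N) (z N) k l‖})
      (eps N ^ (-2 : ℤ))
  maxW : ∀ N, IsGreatest
      ({x : ℝ | ∃ k, x = ‖w N k‖} ∪
        {x : ℝ | ∃ k l, k ≠ l ∧ x = ‖Zq (delta N) (w N) k l‖})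
      (eps N ^ (-2 : ℤ))
  conv_z : ∀ k : Fin n, ∃ L : ℂ,
    Tendsto (fun N => (eps N : ℂ) ^ 2 * z N k) atTop (nhds L)
  conv_w : ∀ k : Fin n, ∃ L : ℂ,
    Tendsto (fun N => (eps N : ℂ) ^ 2 * w N k) atTop (nhds L)
  conv_Z : ∀ k l : Fin n, k ≠ l → ∃ L : ℂ,
    Tendsto (fun N => (eps N : ℂ) ^ 2 * Zq (delta N) (z N) k l) atTop (nhds L)
  conv_W : ∀ k l : Fin n, k ≠ l → ∃ L : ℂ,
    Tendsto (fun N => (eps N : ℂ) ^ 2 * Zq (delta N) (w N) k l) atTop (nhds L)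

/-- `A` and `B` are the z-matrix and the w-matrix of the singular sequence `S`:
symmetric `{0,1}`-matrices whose entries record which of the (convergent) sequences
`ε_N^2 z_i`, `ε_N^2 Z_{ij}` (resp. `ε_N^2 w_i`, `ε_N^2 W_{ij}`) have nonzero limit. -/
structure IsZWMatrices {n : ℕ} {m : Fin n → ℂ} (S : SingularSeq n m)
    (A B : Matrix (Fin n) (Fin n) ℕ) : Prop where
  zeroOne_A : ∀ i j, A i j = 0 ∨ A i j = 1
  symm_A : ∀ i j, A i j = A j i
  zeroOne_B : ∀ i j, B i j = 0 ∨ B i j = 1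
  symm_B : ∀ i j, B i j = B j i
  diag_A : ∀ i, A i i = 1 ↔
    ¬ Tendsto (fun N => (S.eps N : ℂ) ^ 2 * S.z N i) atTop (nhds 0)
  off_A : ∀ i j, i ≠ j → (A i j = 1 ↔
    ¬ Tendsto (fun N => (S.eps N : ℂ) ^ 2 * Zq (S.delta N) (S.z N) i j) atTop (nhds 0))
  diag_B : ∀ i, B i i = 1 ↔
    ¬ Tendsto (fun N => (S.eps N : ℂ) ^ 2 * S.w N i) atTop (nhds 0)
  off_B : ∀ i j, i ≠ j → (B i j = 1 ↔
    ¬ Tendsto (fun N => (S.eps N : ℂ) ^ 2 * Zq (S.delta N) (S.w N) i j) atTop (nhds 0))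

/-!
Along an edge `pq` put `a = ‖ε²Z_{pq}‖`, `b = ‖ε²W_{pq}‖`, `d = ε‖δ_{pq}‖` and
`f = |z_{pq}|/ε`. The normalization `δ² z_{pq} w_{pq} = 1` gives `ab = d⁴`, `f d³ = a` and
`f b = d`, with `a, b ≤ 1`. Hence if `b` has a nonzero limit then `f` stays bounded, and tends
to `0` when moreover `a → 0`; if `a` has a nonzero limit then `f` stays away from `0`, and tends
to `∞` when moreover `b → 0`. Swapping `z` and `w` gives the same for the `w`-separation.

Suppose `pq` is seen by `z` only and `qr` has nonzero `w`-limit. If `pr` has nonzero `w`-limit,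
the `z`-separation of `pq` blows up while those of `qr` and `pr` stay bounded; otherwise `pr` is
seen by `z` only too, and the `w`-separations of `pq` and `pr` tend to `0` while that of `qr`
does not. Both contradict the triangle inequality. So in a triangle whose three entries of `C`
are nonzero all edges have the same type `(a, b) ∈ {(1,0), (0,1), (1,1)}`, giving `3` or `24`.
-/

open Filter Topology

lemma tendsto_zero_of_pow_tendsto_zero {ι : Type*} {l : Filter ι} {x : ι → ℝ}
    (hx : ∀ i, 0 ≤ x i) {k : ℕ} (hk : k ≠ 0) (h : Tendsto (fun i => x i ^ k) l (𝓝 0)) :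
    Tendsto x l (𝓝 0) := by
  have h' := h.rpow_const (p := (k : ℝ)⁻¹) (Or.inr (by positivity))
  rw [Real.zero_rpow (by positivity)] at h'
  exact h'.congr fun i => Real.pow_rpow_inv_natCast (hx i) hk

structure EdgeScaling (a b d f : ℕ → ℝ) : Prop where
  a_nonneg : ∀ N, 0 ≤ a N
  b_nonneg : ∀ N, 0 ≤ b N
  a_le_one : ∀ N, a N ≤ 1
  b_le_one : ∀ N, b N ≤ 1
  d_pos : ∀ N, 0 < d N
  mul_eq_pow : ∀ N, a N * b N = d N ^ 4
  f_mul_pow : ∀ N, f N * d N ^ 3 = a N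
  f_mul_b : ∀ N, f N * b N = d N

namespace EdgeScaling

variable {a b d f : ℕ → ℝ}

lemma d_le_one (h : EdgeScaling a b d f) (N : ℕ) : d N ≤ 1 := by
  have : d N ^ 4 ≤ 1 :=
    h.mul_eq_pow N ▸ mul_le_one₀ (h.a_le_one N) (h.b_nonneg N) (h.b_le_one N)
  exact (pow_le_one_iff_of_nonneg (h.d_pos N).le (by norm_num)).1 this

lemma b_pos (h : EdgeScaling a b d f) (N : ℕ) : 0 < b N := by
  refine (h.b_nonneg N).lt_of_ne fun hb => ?_
  have := h.mul_eq_pow N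
  rw [← hb, mul_zero] at this
  exact (pow_pos (h.d_pos N) 4).ne this

lemma tendsto_d_zero (h : EdgeScaling a b d f) {α β : ℝ} (ha : Tendsto a atTop (𝓝 α))
    (hb : Tendsto b atTop (𝓝 β)) (hαβ : α * β = 0) : Tendsto d atTop (𝓝 0) := by
  refine tendsto_zero_of_pow_tendsto_zero (fun N => (h.d_pos N).le) four_ne_zero ?_
  simpa [hαβ, h.mul_eq_pow] using ha.mul hb

lemma isBoundedUnder_f (h : EdgeScaling a b d f) {β : ℝ} (hb : Tendsto b atTop (𝓝 β))
    (hβ : 0 < β) : IsBoundedUnder (· ≤ ·) atTop f := by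
  refine ⟨2 / β, eventually_map.2 ?_⟩
  filter_upwards [hb.eventually (eventually_gt_nhds (half_lt_self hβ))] with N hN
  have hfb : f N * b N ≤ 1 := h.f_mul_b N ▸ h.d_le_one N
  rw [le_div_iff₀ hβ]
  nlinarith [h.f_mul_pow N, h.a_nonneg N, h.d_pos N]

lemma tendsto_f_atTop (h : EdgeScaling a b d f) {α : ℝ} (ha : Tendsto a atTop (𝓝 α))
    (hα : 0 < α) (hb : Tendsto b atTop (𝓝 0)) : Tendsto f atTop atTop := by
  have hd3 : Tendsto (fun N => d N ^ 3) atTop (𝓝[>] 0) :=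
    tendsto_nhdsWithin_of_tendsto_nhds_of_eventually_within _
      (by simpa using (h.tendsto_d_zero ha hb (mul_zero α)).pow 3)
      (Eventually.of_forall fun N => pow_pos (h.d_pos N) 3)
  refine (ha.pos_mul_atTop hα hd3.inv_tendsto_nhdsGT_zero).congr fun N => ?_
  simp only [Pi.inv_apply, ← h.f_mul_pow N, mul_inv_cancel_right₀ (pow_pos (h.d_pos N) 3).ne']

lemma not_tendsto_f_zero (h : EdgeScaling a b d f) {α : ℝ} (ha : Tendsto a atTop (𝓝 α))
    (hα : 0 < α) : ¬ Tendsto f atTop (𝓝 0) := by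
  intro hf
  have ha0 : Tendsto a atTop (𝓝 0) := by
    refine squeeze_zero h.a_nonneg (fun N => ?_) (by simpa using hf.abs)
    have hd3 : d N ^ 3 ≤ 1 := pow_le_one₀ (h.d_pos N).le (h.d_le_one N)
    rw [← h.f_mul_pow N]
    nlinarith [le_abs_self (f N), abs_nonneg (f N), pow_pos (h.d_pos N) 3]
  exact hα.ne' (tendsto_nhds_unique ha ha0)

lemma tendsto_f_zero (h : EdgeScaling a b d f) {β : ℝ} (ha : Tendsto a atTop (𝓝 0))
    (hb : Tendsto b atTop (𝓝 β)) (hβ : 0 < β) : Tendsto f atTop (𝓝 0) := by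
  have := (h.tendsto_d_zero ha hb (zero_mul β)).div hb hβ.ne'
  rw [zero_div] at this
  exact this.congr fun N => by
    rw [Pi.div_apply, ← h.f_mul_b N, mul_div_cancel_right₀ _ (h.b_pos N).ne']

end EdgeScaling

namespace SingularSeq

variable {n : ℕ} {m : Fin n → ℂ}

def swap (S : SingularSeq n m) : SingularSeq n m where
  z := S.w
  w := S.z
  delta := S.delta
  eps := S.eps
  eps_pos := S.eps_pos
  eps_lim := S.eps_lim
  delta_symm := S.delta_symm
  eq_z := S.eq_w
  eq_w := S.eq_z
  normalize N k l hkl := by linear_combination S.normalize N k l hkl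
  maxZ := S.maxW
  maxW := S.maxZ
  conv_z := S.conv_w
  conv_w := S.conv_z
  conv_Z := S.conv_W
  conv_W := S.conv_Z

@[simp] lemma swap_z (S : SingularSeq n m) : S.swap.z = S.w := rfl
@[simp] lemma swap_w (S : SingularSeq n m) : S.swap.w = S.z := rfl
@[simp] lemma swap_delta (S : SingularSeq n m) : S.swap.delta = S.delta := rfl
@[simp] lemma swap_eps (S : SingularSeq n m) : S.swap.eps = S.eps := rfl

noncomputable def scaledZ (S : SingularSeq n m) (p q : Fin n) (N : ℕ) : ℂ :=
  (S.eps N : ℂ) ^ 2 * Zq (S.delta N) (S.z N) p q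

noncomputable def sepZ (S : SingularSeq n m) (p q : Fin n) (N : ℕ) : ℝ :=
  ‖S.z N p - S.z N q‖ / S.eps N

lemma norm_scaledZ (S : SingularSeq n m) (p q : Fin n) (N : ℕ) :
    ‖S.scaledZ p q N‖ = S.eps N ^ 2 * (‖S.delta N p q‖ ^ 3 * ‖S.z N p - S.z N q‖) := by
  simp [scaledZ, Zq, Complex.norm_real, abs_of_pos (S.eps_pos N)]

lemma norm_scaledZ_le_one (S : SingularSeq n m) {p q : Fin n} (hpq : p ≠ q) (N : ℕ) :
    ‖S.scaledZ p q N‖ ≤ 1 := by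
  have hε := S.eps_pos N
  have hmax : ‖Zq (S.delta N) (S.z N) p q‖ ≤ S.eps N ^ (-2 : ℤ) :=
    (S.maxZ N).2 (Or.inr ⟨p, q, hpq, rfl⟩)
  calc ‖S.scaledZ p q N‖ = S.eps N ^ 2 * ‖Zq (S.delta N) (S.z N) p q‖ := by
        simp [scaledZ, abs_of_pos hε]
    _ ≤ S.eps N ^ 2 * S.eps N ^ (-2 : ℤ) := by gcongr
    _ = 1 := by rw [zpow_neg, zpow_two]; field_simp

lemma norm_normalize (S : SingularSeq n m) {p q : Fin n} (hpq : p ≠ q) (N : ℕ) :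
    ‖S.delta N p q‖ ^ 2 * ‖S.z N p - S.z N q‖ * ‖S.w N p - S.w N q‖ = 1 := by
  have := congrArg norm (S.normalize N p q hpq)
  rwa [norm_mul, norm_mul, norm_pow, norm_one, norm_sub_rev (S.z N q), norm_sub_rev (S.w N q)]
    at this

lemma edgeScaling (S : SingularSeq n m) {p q : Fin n} (hpq : p ≠ q) :
    EdgeScaling (fun N => ‖S.scaledZ p q N‖) (fun N => ‖S.swap.scaledZ p q N‖)
      (fun N => S.eps N * ‖S.delta N p q‖) (S.sepZ p q) where
  a_nonneg N := norm_nonneg _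
  b_nonneg N := norm_nonneg _
  a_le_one := S.norm_scaledZ_le_one hpq
  b_le_one := S.swap.norm_scaledZ_le_one hpq
  d_pos N := mul_pos (S.eps_pos N) (norm_pos_iff.2 fun h0 => by
    simpa [h0] using S.normalize N p q hpq)
  mul_eq_pow N := by
    rw [S.norm_scaledZ, S.swap.norm_scaledZ, swap_eps, swap_delta, swap_z]
    linear_combination (S.eps N ^ 4 * ‖S.delta N p q‖ ^ 4) * S.norm_normalize hpq N
  f_mul_pow N := by
    rw [sepZ, S.norm_scaledZ]
    field_simp [(S.eps_pos N).ne']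
  f_mul_b N := by
    rw [sepZ, S.swap.norm_scaledZ, swap_eps, swap_delta, swap_z]
    field_simp [(S.eps_pos N).ne']
    linear_combination ‖S.delta N p q‖ * S.norm_normalize hpq N

lemma sepZ_nonneg (S : SingularSeq n m) (p q : Fin n) (N : ℕ) : 0 ≤ S.sepZ p q N :=
  div_nonneg (norm_nonneg _) (S.eps_pos N).le

lemma sepZ_comm (S : SingularSeq n m) (p q : Fin n) (N : ℕ) : S.sepZ p q N = S.sepZ q p N := by
  rw [sepZ, sepZ, norm_sub_rev]

lemma sepZ_le_add (S : SingularSeq n m) (p q r : Fin n) (N : ℕ) :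
    S.sepZ p r N ≤ S.sepZ p q N + S.sepZ q r N := by
  rw [sepZ, sepZ, sepZ, ← add_div]
  exact div_le_div_of_nonneg_right (norm_sub_le_norm_sub_add_norm_sub _ _ _) (S.eps_pos N).le

end SingularSeq

namespace IsZWMatrices

variable {n : ℕ} {m : Fin n → ℂ} {S : SingularSeq n m} {A B : Matrix (Fin n) (Fin n) ℕ}

lemma swap (hAB : IsZWMatrices S A B) : IsZWMatrices S.swap B A :=
  ⟨hAB.zeroOne_B, hAB.symm_B, hAB.zeroOne_A, hAB.symm_A,
    hAB.diag_B, hAB.off_B, hAB.diag_A, hAB.off_A⟩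

lemma tendsto_norm_scaledZ_zero (hAB : IsZWMatrices S A B) {p q : Fin n} (hpq : p ≠ q)
    (h : A p q = 0) : Tendsto (fun N => ‖S.scaledZ p q N‖) atTop (𝓝 0) :=
  tendsto_zero_iff_norm_tendsto_zero.1 <|
    not_not.1 fun h' => by simpa [h] using (hAB.off_A p q hpq).2 h'

lemma exists_pos_tendsto_norm_scaledZ (hAB : IsZWMatrices S A B) {p q : Fin n} (hpq : p ≠ q)
    (h : A p q = 1) : ∃ α > 0, Tendsto (fun N => ‖S.scaledZ p q N‖) atTop (𝓝 α) := by
  obtain ⟨L, hL⟩ := S.conv_Z p q hpq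
  refine ⟨‖L‖, norm_pos_iff.2 ?_, hL.norm⟩
  rintro rfl
  exact (hAB.off_A p q hpq).1 h hL

lemma B_eq_zero_of_adjacent (hAB : IsZWMatrices S A B) {p q r : Fin n} (hpq : p ≠ q)
    (hqr : q ≠ r) (hpr : p ≠ r) (hApq : A p q = 1) (hBpq : B p q = 0)
    (hpr0 : A p r + B p r ≠ 0) : B q r = 0 := by
  refine (hAB.zeroOne_B q r).resolve_right fun hBqr => ?_
  obtain ⟨α, hα, hapq⟩ := hAB.exists_pos_tendsto_norm_scaledZ hpq hApq
  have hbpq := hAB.swap.tendsto_norm_scaledZ_zero hpq hBpq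
  obtain ⟨β, hβ, hbqr⟩ := hAB.swap.exists_pos_tendsto_norm_scaledZ hqr hBqr
  rcases hAB.zeroOne_B p r with hBpr | hBpr
  · have hApr : A p r = 1 := (hAB.zeroOne_A p r).resolve_left (by omega)
    obtain ⟨α', hα', hapr⟩ := hAB.exists_pos_tendsto_norm_scaledZ hpr hApr
    have hbpr := hAB.swap.tendsto_norm_scaledZ_zero hpr hBpr
    have hqr_pos := (S.swap.edgeScaling hqr).not_tendsto_f_zero hbqr hβ
    have hpq_zero := (S.swap.edgeScaling hpq).tendsto_f_zero hbpq hapq hα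
    have hpr_zero := (S.swap.edgeScaling hpr).tendsto_f_zero hbpr hapr hα'
    refine hqr_pos (squeeze_zero (S.swap.sepZ_nonneg q r) (fun N => ?_)
      (by simpa using hpq_zero.add hpr_zero))
    rw [S.swap.sepZ_comm p q]
    exact S.swap.sepZ_le_add q p r N
  · obtain ⟨β', hβ', hbpr⟩ := hAB.swap.exists_pos_tendsto_norm_scaledZ hpr hBpr
    have hbounded := isBoundedUnder_le_add ((S.edgeScaling hpr).isBoundedUnder_f hbpr hβ')
      ((S.edgeScaling hqr).isBoundedUnder_f hbqr hβ)
    refine not_isBoundedUnder_of_tendsto_atTop (tendsto_atTop_mono (fun N => ?_)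
      ((S.edgeScaling hpq).tendsto_f_atTop hapq hα hbpq)) hbounded
    rw [Pi.add_apply, S.sepZ_comm q r]
    exact S.sepZ_le_add p r q N

lemma eq_of_triangle (hAB : IsZWMatrices S A B) {p q r : Fin n} (hpq : p ≠ q) (hqr : q ≠ r)
    (hpr : p ≠ r) (hpq0 : A p q + B p q ≠ 0) (hqr0 : A q r + B q r ≠ 0)
    (hpr0 : A p r + B p r ≠ 0) : A p q = A q r ∧ B p q = B q r := by
  have := hAB.B_eq_zero_of_adjacent hpq hqr hpr
  have := hAB.B_eq_zero_of_adjacent hqr.symm hpq.symm hpr.symm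
  have := hAB.swap.B_eq_zero_of_adjacent hpq hqr hpr
  have := hAB.swap.B_eq_zero_of_adjacent hqr.symm hpq.symm hpr.symm
  have := hAB.symm_A q p; have := hAB.symm_A r q; have := hAB.symm_A r p
  have := hAB.symm_B q p; have := hAB.symm_B r q; have := hAB.symm_B r p
  have := hAB.zeroOne_A p q; have := hAB.zeroOne_B p q
  have := hAB.zeroOne_A q r; have := hAB.zeroOne_B q r
  omega

end IsZWMatrices

theorem fourth_rule_of_triangles_general (n : ℕ) (m : Fin n → ℂ)
    (S : SingularSeq n m) (A B : Matrix (Fin n) (Fin n) ℕ)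
    (hAB : IsZWMatrices S A B) :
    ∀ i j k : Fin n, i < j → j < k →
      (A i j + B i j) * (A j k + B j k) * (A i k + B i k) *
          max (A i j + A j k + A i k) (B i j + B j k + B i k) ∈ ({0, 3, 24} : Set ℕ) := by
  intro i j k hij hjk
  have hik := hij.trans hjk
  by_cases hzero : A i j + B i j = 0 ∨ A j k + B j k = 0 ∨ A i k + B i k = 0
  · rcases hzero with h | h | h <;> simp [h]
  push Not at hzero
  obtain ⟨hij0, hjk0, hik0⟩ := hzero
  obtain ⟨hAjk, hBjk⟩ := hAB.eq_of_triangle hij.ne hjk.ne hik.ne hij0 hjk0 hik0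
  obtain ⟨hAik, hBik⟩ := hAB.eq_of_triangle hij.ne' hik.ne hjk.ne
    (by rwa [hAB.symm_A, hAB.symm_B]) hik0 hjk0
  rw [hAB.symm_A j i] at hAik
  rw [hAB.symm_B j i] at hBik
  rw [← hAjk, ← hBjk, ← hAik, ← hBik]
  rcases hAB.zeroOne_A i j with h | h <;> rcases hAB.zeroOne_B i j with h' | h' <;> simp [h, h']

theorem fourth_rule_of_triangles (n : ℕ) (hn : 3 ≤ n) (m : Fin n → ℂ)
    (hm : ∀ I : Finset (Fin n), I.Nonempty → ∑ k ∈ I, m k ≠ 0)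
    (S : SingularSeq n m) (A B : Matrix (Fin n) (Fin n) ℕ)
    (hAB : IsZWMatrices S A B) :
    ∀ i j k : Fin n, i < j → j < k →
      (A i j + B i j) * (A j k + B j k) * (A i k + B i k) *
          max (A i j + A j k + A i k) (B i j + B j k + B i k) ∈ ({0, 3, 24} : Set ℕ) :=
  fourth_rule_of_triangles_general n m S A B hAB
end

section
/- Let A and B be the z-matrix and w-matrix of a singular sequence, let i ≠ j be indices in {1,…,n}, and suppose the (nonzero) complex sequence z_{ij} = z_i − z_j has level k and the (nonzero) complex sequence w_{ij} = w_i − w_j has level l, for some k, l ∈ {0,1,2,3,4,5}. If a_{ij} + b_{ij} ≥ 1 (i.e., there is an edge between bodies i and j), then k + l = 6. If a_{ij} + b_{ij} = 0 (no edge between i and j), then k + l ≥ 6. -/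
open Filter Finset

/-- `a ≺ b`: the ratio `a/b` tends to `0`. -/
def Prec (a b : ℕ → ℂ) : Prop :=
  Tendsto (fun N => a N / b N) atTop (nhds 0)

/-- The ratio `a/b` is bounded. -/
def BddRatio (a b : ℕ → ℂ) : Prop :=
  ∃ C : ℝ, ∀ N, ‖a N / b N‖ ≤ C

/-- `a ≈ b`: both `a/b` and `b/a` are bounded. -/
def Approx (a b : ℕ → ℂ) : Prop := BddRatio a b ∧ BddRatio b a

/-- The sequence `N ↦ (ε N)^k`, viewed in `ℂ`. -/
noncomputable def epow (eps : ℕ → ℝ) (k : ℤ) : ℕ → ℂ := fun N => (eps N : ℂ) ^ k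

/-- The sequence `a` has order in level `k` with respect to `ε`:
level 0 means `a ≺ ε^2`, level 1 means `a ≈ ε^2`, level 2 means
`ε^2 ≺ a ≺ ε`, level 3 means `a ≈ ε`, level 4 means `ε ≺ a ≺ ε^{-2}`,
and level 5 means `a ≈ ε^{-2}`. -/
def HasLevel (eps : ℕ → ℝ) (a : ℕ → ℂ) : ℕ → Prop
  | 0 => Prec a (epow eps 2)
  | 1 => Approx a (epow eps 2)
  | 2 => Prec (epow eps 2) a ∧ Prec a (epow eps 1)
  | 3 => Approx a (epow eps 1)
  | 4 => Prec (epow eps 1) a ∧ Prec a (epow eps (-2))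
  | 5 => Approx a (epow eps (-2))
  | _ => False

/-!
Write `z = z_i - z_j` and `w = w_i - w_j`. Cubing the normalization `δ² z w = 1` gives
`Z_{ij}² · w³ z = 1` and `W_{ij}² · z³ w = 1`. As `|Z_{ij}|, |W_{ij}| ≤ ε⁻²`, both `w³ z` and
`z³ w` are bounded below by `ε⁴`; an edge `a_{ij} = 1` (resp. `b_{ij} = 1`) means that
`ε² Z_{ij}` (resp. `ε² W_{ij}`) has a nonzero limit, so that `w³ z` (resp. `z³ w`) is moreover
`O(ε⁴)`. Reading levels as exponents of `ε` (levels 1, 3, 5 are `ε², ε, ε⁻²`, the even levels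
the open ranges between them), the lower bounds rule out `k + l ≤ 5` and the upper bound rules
out `k + l ≥ 7`.
-/

open Asymptotics

section Levels

variable {eps : ℕ → ℝ}

lemma epow_ne_zero (he : ∀ N, 0 < eps N) (p : ℤ) (N : ℕ) : epow eps p N ≠ 0 :=
  zpow_ne_zero p (Complex.ofReal_ne_zero.2 (he N).ne')

lemma epow_cube_mul (he : ∀ N, 0 < eps N) (p q : ℤ) :
    (fun N => epow eps p N ^ 3 * epow eps q N) = epow eps (3 * p + q) := by
  funext N
  rw [epow, epow, epow, zpow_add₀ (Complex.ofReal_ne_zero.2 (he N).ne'), zpow_mul',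
    zpow_ofNat]

lemma tendsto_epow_zero (hlim : Tendsto eps atTop (nhds 0)) {r : ℤ} (hr : 0 < r) :
    Tendsto (epow eps r) atTop (nhds 0) := by
  lift r to ℕ using hr.le
  have := ((Complex.continuous_ofReal.tendsto 0).comp hlim).pow r
  rw [Complex.ofReal_zero, zero_pow (Int.natCast_pos.1 hr).ne'] at this
  exact this.congr fun N => (zpow_natCast _ r).symm

lemma epow_isLittleO_epow (he : ∀ N, 0 < eps N) (hlim : Tendsto eps atTop (nhds 0))
    {p q : ℤ} (h : p < q) : epow eps q =o[atTop] epow eps p := by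
  rw [isLittleO_iff_tendsto fun N hN => absurd hN (epow_ne_zero he p N)]
  convert tendsto_epow_zero hlim (sub_pos.2 h) using 1
  funext N
  exact (zpow_sub₀ (Complex.ofReal_ne_zero.2 (he N).ne') q p).symm

lemma Prec.isLittleO {a b : ℕ → ℂ} (hb : ∀ N, b N ≠ 0) (h : Prec a b) : a =o[atTop] b :=
  (isLittleO_iff_tendsto fun N hN => absurd hN (hb N)).2 h

lemma BddRatio.isBigO {a b : ℕ → ℂ} (hb : ∀ N, b N ≠ 0) (h : BddRatio a b) :
    a =O[atTop] b := by
  obtain ⟨C, hC⟩ := h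
  refine isBigO_iff.2 ⟨C, Eventually.of_forall fun N => ?_⟩
  have := hC N
  rwa [norm_div, div_le_iff₀ (norm_pos_iff.2 (hb N))] at this

lemma HasLevel.le_five {a : ℕ → ℂ} {k : ℕ} (h : HasLevel eps a k) : k ≤ 5 := by
  match k, h with
  | 0, _ | 1, _ | 2, _ | 3, _ | 4, _ | 5, _ => omega

/-- A sequence of level `k` lies between `ε ^ levelExp (k - 1)` and `ε ^ levelExp k`
(with strict bounds at even levels, and no lower bound at level `0`). -/
def levelExp : ℕ → ℤ
  | 0 | 1 => 2
  | 2 | 3 => 1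
  | _ => -2

lemma HasLevel.isBigO_epow (he : ∀ N, 0 < eps N) {a : ℕ → ℂ} {k : ℕ} (h : HasLevel eps a k) :
    a =O[atTop] epow eps (levelExp k) ∧ (Even k → a =o[atTop] epow eps (levelExp k)) := by
  have hne := epow_ne_zero he
  match k, h with
  | 0, h => exact ⟨(h.isLittleO (hne 2)).isBigO, fun _ => h.isLittleO (hne 2)⟩
  | 1, h => exact ⟨h.1.isBigO (hne 2), fun h => absurd h (by decide)⟩
  | 2, h => exact ⟨(h.2.isLittleO (hne 1)).isBigO, fun _ => h.2.isLittleO (hne 1)⟩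
  | 3, h => exact ⟨h.1.isBigO (hne 1), fun h => absurd h (by decide)⟩
  | 4, h => exact ⟨(h.2.isLittleO (hne (-2))).isBigO, fun _ => h.2.isLittleO (hne (-2))⟩
  | 5, h => exact ⟨h.1.isBigO (hne (-2)), fun h => absurd h (by decide)⟩

lemma HasLevel.epow_isBigO {a : ℕ → ℂ} (ha : ∀ N, a N ≠ 0) {k : ℕ} (h : HasLevel eps a k)
    (hk : 1 ≤ k) :
    epow eps (levelExp (k - 1)) =O[atTop] a ∧
      (Even k → epow eps (levelExp (k - 1)) =o[atTop] a) := by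
  match k, h with
  | 1, h => exact ⟨h.2.isBigO ha, fun h => absurd h (by decide)⟩
  | 2, h => exact ⟨(h.1.isLittleO ha).isBigO, fun _ => h.1.isLittleO ha⟩
  | 3, h => exact ⟨h.2.isBigO ha, fun h => absurd h (by decide)⟩
  | 4, h => exact ⟨(h.1.isLittleO ha).isBigO, fun _ => h.1.isLittleO ha⟩
  | 5, h => exact ⟨h.2.isBigO ha, fun h => absurd h (by decide)⟩

lemma levelExp_of_add_le_five {k l : ℕ} (hk : k ≤ 5) (hl : l ≤ 5) (h : k + l ≤ 5) :
    (4 < 3 * levelExp k + levelExp l ∨ 3 * levelExp k + levelExp l = 4 ∧ (Even k ∨ Even l)) ∨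
      (4 < 3 * levelExp l + levelExp k ∨
        3 * levelExp l + levelExp k = 4 ∧ (Even l ∨ Even k)) := by
  interval_cases k <;> interval_cases l <;> first | omega | decide

lemma levelExp_of_seven_le_add {k l : ℕ} (hk : k ≤ 5) (hl : l ≤ 5) (h : 7 ≤ k + l) :
    (3 * levelExp (k - 1) + levelExp (l - 1) < 4 ∨
        3 * levelExp (k - 1) + levelExp (l - 1) = 4 ∧ (Even k ∨ Even l)) ∧
      (3 * levelExp (l - 1) + levelExp (k - 1) < 4 ∨
        3 * levelExp (l - 1) + levelExp (k - 1) = 4 ∧ (Even l ∨ Even k)) := by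
  interval_cases k <;> interval_cases l <;> first | omega | decide

end Levels

section Cubes

variable {α 𝕜 : Type*} [NormedField 𝕜] {l : Filter α}

lemma isLittleO_cube_mul {f f' g g' : α → 𝕜} (h : f =O[l] g) (h' : f' =O[l] g')
    (hs : f =o[l] g ∨ f' =o[l] g') :
    (fun x => f x ^ 3 * f' x) =o[l] fun x => g x ^ 3 * g' x := by
  rcases hs with hs | hs
  · exact (hs.pow three_pos).mul_isBigO h'
  · exact (h.pow 3).mul_isLittleO hs

variable {eps : ℕ → ℝ}

lemma cube_mul_isLittleO_epow_four (he : ∀ N, 0 < eps N) (hlim : Tendsto eps atTop (nhds 0))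
    {z w : ℕ → ℂ} {p q : ℤ} (hz : z =O[atTop] epow eps p) (hw : w =O[atTop] epow eps q)
    (h : 4 < 3 * p + q ∨ 3 * p + q = 4 ∧ (z =o[atTop] epow eps p ∨ w =o[atTop] epow eps q)) :
    (fun N => z N ^ 3 * w N) =o[atTop] epow eps 4 := by
  rcases h with h | ⟨h, hs⟩
  · have := (hz.pow 3).mul hw
    rw [epow_cube_mul he] at this
    exact this.trans_isLittleO (epow_isLittleO_epow he hlim h)
  · rw [← h, ← epow_cube_mul he]
    exact isLittleO_cube_mul hz hw hs

lemma epow_four_isLittleO_cube_mul (he : ∀ N, 0 < eps N) (hlim : Tendsto eps atTop (nhds 0))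
    {z w : ℕ → ℂ} {p q : ℤ} (hz : epow eps p =O[atTop] z) (hw : epow eps q =O[atTop] w)
    (h : 3 * p + q < 4 ∨ 3 * p + q = 4 ∧ (epow eps p =o[atTop] z ∨ epow eps q =o[atTop] w)) :
    epow eps 4 =o[atTop] fun N => z N ^ 3 * w N := by
  rcases h with h | ⟨h, hs⟩
  · have := (hz.pow 3).mul hw
    rw [epow_cube_mul he] at this
    exact (epow_isLittleO_epow he hlim h).trans_isBigO this
  · rw [← h, ← epow_cube_mul he]
    exact isLittleO_cube_mul hz hw hs

lemma HasLevel.cube_mul_isLittleO_of_add_le_five (he : ∀ N, 0 < eps N)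
    (hlim : Tendsto eps atTop (nhds 0)) {z w : ℕ → ℂ} {k l : ℕ} (hz : HasLevel eps z k)
    (hw : HasLevel eps w l) (h : k + l ≤ 5) :
    (fun N => z N ^ 3 * w N) =o[atTop] epow eps 4 ∨
      (fun N => w N ^ 3 * z N) =o[atTop] epow eps 4 := by
  obtain ⟨hzO, hzo⟩ := hz.isBigO_epow he
  obtain ⟨hwO, hwo⟩ := hw.isBigO_epow he
  rcases levelExp_of_add_le_five hz.le_five hw.le_five h with h | h
  · exact .inl <| cube_mul_isLittleO_epow_four he hlim hzO hwO <|
      h.imp_right (And.imp_right (Or.imp hzo hwo))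
  · exact .inr <| cube_mul_isLittleO_epow_four he hlim hwO hzO <|
      h.imp_right (And.imp_right (Or.imp hwo hzo))

lemma HasLevel.epow_four_isLittleO_cube_mul_of_seven_le_add (he : ∀ N, 0 < eps N)
    (hlim : Tendsto eps atTop (nhds 0)) {z w : ℕ → ℂ} (hz0 : ∀ N, z N ≠ 0)
    (hw0 : ∀ N, w N ≠ 0) {k l : ℕ} (hz : HasLevel eps z k) (hw : HasLevel eps w l)
    (h : 7 ≤ k + l) :
    (epow eps 4 =o[atTop] fun N => z N ^ 3 * w N) ∧
      (epow eps 4 =o[atTop] fun N => w N ^ 3 * z N) := by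
  have hk := hz.le_five
  have hl := hw.le_five
  obtain ⟨hzO, hzo⟩ := hz.epow_isBigO hz0 (by omega)
  obtain ⟨hwO, hwo⟩ := hw.epow_isBigO hw0 (by omega)
  obtain ⟨hzw, hwz⟩ := levelExp_of_seven_le_add hk hl h
  exact ⟨epow_four_isLittleO_cube_mul he hlim hzO hwO <|
      hzw.imp_right (And.imp_right (Or.imp hzo hwo)),
    epow_four_isLittleO_cube_mul he hlim hwO hzO <|
      hwz.imp_right (And.imp_right (Or.imp hwo hzo))⟩

end Cubes

section Separations

variable {eps : ℕ → ℝ}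

lemma Zq_sq_mul_cube_mul {n : ℕ} {δ : Fin n → Fin n → ℂ} {z w : Fin n → ℂ} {i j : Fin n}
    (h : δ i j ^ 2 * (z j - z i) * (w j - w i) = 1) :
    Zq δ z i j ^ 2 * ((w i - w j) ^ 3 * (z i - z j)) = 1 :=
  calc _ = (δ i j ^ 2 * (z j - z i) * (w j - w i)) ^ 3 := by rw [Zq]; ring
    _ = 1 := by rw [h, one_pow]

lemma epow_four_isBigO_of_sq_mul_eq_one (he : ∀ N, 0 < eps N) {f g : ℕ → ℂ}
    (hfg : ∀ N, f N ^ 2 * g N = 1) (hf : ∀ N, ‖f N‖ ≤ eps N ^ (-2 : ℤ)) :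
    epow eps 4 =O[atTop] g := by
  refine isBigO_iff.2 ⟨1, Eventually.of_forall fun N => ?_⟩
  have hnorm : ‖f N‖ ^ 2 * ‖g N‖ = 1 := by simpa using congrArg norm (hfg N)
  have hε : ‖epow eps 4 N‖ = ((eps N ^ (-2 : ℤ)) ^ 2)⁻¹ := by
    rw [epow, norm_zpow, Complex.norm_real, Real.norm_of_nonneg (he N).le, ← zpow_natCast,
      ← zpow_mul, ← zpow_neg]
    norm_num
  have hf0 : 0 < ‖f N‖ ^ 2 := (sq_nonneg _).lt_of_ne' (left_ne_zero_of_mul_eq_one hnorm)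
  rw [one_mul, eq_inv_of_mul_eq_one_right hnorm, hε]
  exact inv_anti₀ hf0 (pow_le_pow_left₀ (norm_nonneg _) (hf N) 2)

lemma isBigO_epow_four_of_sq_mul_eq_one {f g : ℕ → ℂ} (hfg : ∀ N, f N ^ 2 * g N = 1) {L : ℂ}
    (hL : Tendsto (fun N => (eps N : ℂ) ^ 2 * f N) atTop (nhds L)) (hL0 : L ≠ 0) :
    g =O[atTop] epow eps 4 := by
  refine isBigO_of_div_tendsto_nhds_of_ne_zero (a := L ^ 2) ?_ (pow_ne_zero 2 hL0)
  convert hL.pow 2 using 1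
  funext N
  rw [epow, eq_inv_of_mul_eq_one_right (hfg N), div_inv_eq_mul, zpow_ofNat]
  ring

end Separations

namespace SingularSeq

variable {n : ℕ} {m : Fin n → ℂ} (S : SingularSeq n m) {i j : Fin n}

lemma z_sub_ne_zero (hij : i ≠ j) (N : ℕ) : S.z N i - S.z N j ≠ 0 := fun h => by
  simpa [← neg_sub (S.z N i), h] using S.normalize N i j hij

lemma w_sub_ne_zero (hij : i ≠ j) (N : ℕ) : S.w N i - S.w N j ≠ 0 := fun h => by
  simpa [← neg_sub (S.w N i), h] using S.normalize N i j hij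

lemma normalize_comm (hij : i ≠ j) (N : ℕ) :
    S.delta N i j ^ 2 * (S.w N j - S.w N i) * (S.z N j - S.z N i) = 1 := by
  rw [mul_right_comm]
  exact S.normalize N i j hij

lemma epow_four_isBigO_cube_mul (hij : i ≠ j) :
    (epow S.eps 4 =O[atTop] fun N => (S.z N i - S.z N j) ^ 3 * (S.w N i - S.w N j)) ∧
      (epow S.eps 4 =O[atTop] fun N => (S.w N i - S.w N j) ^ 3 * (S.z N i - S.z N j)) :=
  ⟨epow_four_isBigO_of_sq_mul_eq_one S.eps_pos
      (fun N => Zq_sq_mul_cube_mul (S.normalize_comm hij N))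
      fun N => (S.maxW N).2 (.inr ⟨i, j, hij, rfl⟩),
    epow_four_isBigO_of_sq_mul_eq_one S.eps_pos
      (fun N => Zq_sq_mul_cube_mul (S.normalize N i j hij))
      fun N => (S.maxZ N).2 (.inr ⟨i, j, hij, rfl⟩)⟩

end SingularSeq

lemma IsZWMatrices.cube_mul_isBigO_epow_four {n : ℕ} {m : Fin n → ℂ} {S : SingularSeq n m}
    {A B : Matrix (Fin n) (Fin n) ℕ} (hAB : IsZWMatrices S A B) {i j : Fin n} (hij : i ≠ j)
    (hedge : 1 ≤ A i j + B i j) :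
    ((fun N => (S.z N i - S.z N j) ^ 3 * (S.w N i - S.w N j)) =O[atTop] epow S.eps 4) ∨
      ((fun N => (S.w N i - S.w N j) ^ 3 * (S.z N i - S.z N j)) =O[atTop] epow S.eps 4) := by
  rcases hAB.zeroOne_A i j with hA | hA
  · have hB : B i j = 1 := by rcases hAB.zeroOne_B i j with hB | hB <;> omega
    obtain ⟨L, hL⟩ := S.conv_W i j hij
    have hL0 : L ≠ 0 := by
      rintro rfl
      exact (hAB.off_B i j hij).1 hB hL
    exact .inl <| isBigO_epow_four_of_sq_mul_eq_one
      (fun N => Zq_sq_mul_cube_mul (S.normalize_comm hij N)) hL hL0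
  · obtain ⟨L, hL⟩ := S.conv_Z i j hij
    have hL0 : L ≠ 0 := by
      rintro rfl
      exact (hAB.off_A i j hij).1 hA hL
    exact .inr <| isBigO_epow_four_of_sq_mul_eq_one
      (fun N => Zq_sq_mul_cube_mul (S.normalize N i j hij)) hL hL0

theorem level_sum_of_separations_general (n : ℕ) (m : Fin n → ℂ)
    (S : SingularSeq n m) (A B : Matrix (Fin n) (Fin n) ℕ)
    (hAB : IsZWMatrices S A B)
    (i j : Fin n) (hij : i ≠ j) (k l : ℕ)
    (hkz : HasLevel S.eps (fun N => S.z N i - S.z N j) k)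
    (hlw : HasLevel S.eps (fun N => S.w N i - S.w N j) l) :
    (1 ≤ A i j + B i j → k + l = 6) ∧ (A i j + B i j = 0 → 6 ≤ k + l) := by
  have hε : ∃ᶠ N in atTop, epow S.eps 4 N ≠ 0 := .of_forall (epow_ne_zero S.eps_pos 4)
  have h6 : 6 ≤ k + l := by
    by_contra! h
    obtain ⟨hzw, hwz⟩ := S.epow_four_isBigO_cube_mul hij
    rcases hkz.cube_mul_isLittleO_of_add_le_five S.eps_pos S.eps_lim hlw (by omega) with h | h
    exacts [hzw.not_isLittleO hε h, hwz.not_isLittleO hε h]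
  refine ⟨fun hedge => ?_, fun _ => h6⟩
  by_contra h7
  obtain ⟨hzw, hwz⟩ := hkz.epow_four_isLittleO_cube_mul_of_seven_le_add S.eps_pos S.eps_lim
    (S.z_sub_ne_zero hij) (S.w_sub_ne_zero hij) hlw (by omega)
  rcases hAB.cube_mul_isBigO_epow_four hij hedge with h | h
  exacts [hzw.not_isBigO hε h, hwz.not_isBigO hε h]

theorem level_sum_of_separations (n : ℕ) (hn : 2 ≤ n) (m : Fin n → ℂ)
    (hm : ∀ I : Finset (Fin n), I.Nonempty → ∑ k ∈ I, m k ≠ 0)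
    (S : SingularSeq n m) (A B : Matrix (Fin n) (Fin n) ℕ)
    (hAB : IsZWMatrices S A B)
    (i j : Fin n) (hij : i ≠ j) (k l : ℕ) (hk : k ≤ 5) (hl : l ≤ 5)
    (hzne : ∀ N, S.z N i - S.z N j ≠ 0)
    (hwne : ∀ N, S.w N i - S.w N j ≠ 0)
    (hkz : HasLevel S.eps (fun N => S.z N i - S.z N j) k)
    (hlw : HasLevel S.eps (fun N => S.w N i - S.w N j) l) :
    (1 ≤ A i j + B i j → k + l = 6) ∧ (A i j + B i j = 0 → 6 ≤ k + l) :=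
  level_sum_of_separations_general n m S A B hAB i j hij k l hkz hlw
end
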